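/- arXiv:2603.09401 — 10 statements merged into one kernel-verified Lean document; each statement's English description precedes it below -/
import Mathlib

section
/- Let A be a unital C*-algebra and let U = (u_{i,j})_{i,j=1}^n be a bi-unitary matrix over A such that each entry u_{i,j} is a partial isometry. Then for all i ≠ j and all k: u_{i,k} u_{j,k}^* = 0, u_{k,i} u_{k,j}^* = 0, u_{i,k}^* u_{j,k} = 0, and u_{k,i}^* u_{k,j} = 0. -/
/-! The initial projections `v⋆v` of partial isometries summing to `1` are pairwise orthogonal:
if `p + q ≤ 1` then `q ≤ 1 - p`, which for projections means `(1 - p) q = q`, i.e. `p q = 0`.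
Then `vᵢ v⋆ⱼ = vᵢ (v⋆ᵢ vᵢ)(v⋆ⱼ vⱼ) v⋆ⱼ = 0`. Applied to the rows and columns of `U` and of `U⋆`
(the hypotheses say exactly that these initial or final projections sum to `1`), this gives
all four identities. -/

def IsPartialIsometry {R : Type*} [Mul R] [Star R] (v : R) : Prop :=
  v * star v * v = v

namespace IsPartialIsometry

variable {R : Type*} [Semiring R] [StarRing R] {v : R}

protected theorem star (hv : IsPartialIsometry v) : IsPartialIsometry (star v) := by
  simpa only [IsPartialIsometry, star_mul, star_star, mul_assoc] using congrArg Star.star hv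

theorem isStarProjection_star_mul_self (hv : IsPartialIsometry v) :
    IsStarProjection (star v * v) where
  isIdempotentElem := by
    rw [IsIdempotentElem, mul_assoc, ← mul_assoc v, hv]
  isSelfAdjoint := IsSelfAdjoint.star_mul_self v

theorem mul_star_mul_self (hv : IsPartialIsometry v) : v * (star v * v) = v := by
  rw [← mul_assoc, hv]

theorem star_mul_self_mul_star (hv : IsPartialIsometry v) : star v * v * star v = star v := by
  simpa only [IsPartialIsometry, star_star] using hv.star

end IsPartialIsometry

section CStarAlgebra

variable {A : Type*} [CStarAlgebra A]

theorem IsStarProjection.mul_eq_zero_of_add_le_one [PartialOrder A] [StarOrderedRing A]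
    {p q : A} (hp : IsStarProjection p) (hq : IsStarProjection q) (hpq : p + q ≤ 1) :
    p * q = 0 := by
  have hq_le : q ≤ 1 - p := le_sub_iff_add_le'.mpr hpq
  have h : (1 - p) * q = q := (hq.le_iff_mul_eq_right hp.one_sub).mp hq_le
  rwa [sub_mul, one_mul, sub_eq_self] at h

theorem IsStarProjection.mul_eq_zero_of_sum_eq_one
    {ι : Type*} [Fintype ι] {p : ι → A} (hp : ∀ a, IsStarProjection (p a))
    (hsum : ∑ a, p a = 1) {i j : ι} (hij : i ≠ j) : p i * p j = 0 := by
  classical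
  let := CStarAlgebra.spectralOrder A
  have := CStarAlgebra.spectralOrderedRing A
  refine (hp i).mul_eq_zero_of_add_le_one (hp j) ?_
  calc p i + p j = ∑ a ∈ {i, j}, p a := (Finset.sum_pair hij).symm
    _ ≤ ∑ a, p a := Finset.sum_le_sum_of_subset_of_nonneg (Finset.subset_univ _)
        fun a _ _ => (hp a).nonneg
    _ = 1 := hsum

theorem IsPartialIsometry.mul_star_eq_zero_of_sum_star_mul_self_eq_one
    {ι : Type*} [Fintype ι] {v : ι → A} (hv : ∀ a, IsPartialIsometry (v a))
    (hsum : ∑ a, star (v a) * v a = 1) {i j : ι} (hij : i ≠ j) :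
    v i * star (v j) = 0 := by
  have horth : (star (v i) * v i) * (star (v j) * v j) = 0 :=
    IsStarProjection.mul_eq_zero_of_sum_eq_one
      (fun a => (hv a).isStarProjection_star_mul_self) hsum hij
  calc v i * star (v j)
      = v i * (star (v i) * v i) * (star (v j) * v j * star (v j)) := by
        rw [(hv i).mul_star_mul_self, (hv j).star_mul_self_mul_star]
    _ = v i * ((star (v i) * v i) * (star (v j) * v j)) * star (v j) := by
        simp only [mul_assoc]
    _ = 0 := by rw [horth, mul_zero, zero_mul]

theorem IsPartialIsometry.star_mul_eq_zero_of_sum_mul_star_self_eq_one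
    {ι : Type*} [Fintype ι] {v : ι → A} (hv : ∀ a, IsPartialIsometry (v a))
    (hsum : ∑ a, v a * star (v a) = 1) {i j : ι} (hij : i ≠ j) :
    star (v i) * v j = 0 := by
  simpa only [star_star] using
    mul_star_eq_zero_of_sum_star_mul_self_eq_one (v := fun a => star (v a))
      (fun a => (hv a).star) (by simpa only [star_star] using hsum) hij

end CStarAlgebra

/-- if all entries of a bi-unitary matrix are partial isometries,
then entries in the same row or column are mutually orthogonal. -/
theorem stmt1 {A : Type*} [NormedRing A] [StarRing A] [CStarRing A]
    [CompleteSpace A] [NormedAlgebra ℂ A] [StarModule ℂ A]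
    (n : ℕ) (u : Fin n → Fin n → A)
    (hUU : ∀ a b : Fin n, ∑ x, u a x * star (u b x) = if a = b then 1 else 0)
    (hUU' : ∀ x y : Fin n, ∑ a, star (u a x) * u a y = if x = y then 1 else 0)
    (hUt : ∀ x y : Fin n, ∑ a, u a x * star (u a y) = if x = y then 1 else 0)
    (hUt' : ∀ a b : Fin n, ∑ x, star (u a x) * u b x = if a = b then 1 else 0)
    (hpi : ∀ i j : Fin n, u i j * star (u i j) * u i j = u i j) :
    ∀ i j k : Fin n, i ≠ j →
      u i k * star (u j k) = 0 ∧ u k i * star (u k j) = 0 ∧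
      star (u i k) * u j k = 0 ∧ star (u k i) * u k j = 0 := by
  let : CStarAlgebra A := { }
  intro i j k hij
  refine ⟨?_, ?_, ?_, ?_⟩
  · exact IsPartialIsometry.mul_star_eq_zero_of_sum_star_mul_self_eq_one
      (fun a => hpi a k) (by simpa using hUU' k k) hij
  · exact IsPartialIsometry.mul_star_eq_zero_of_sum_star_mul_self_eq_one
      (fun x => hpi k x) (by simpa using hUt' k k) hij
  · exact IsPartialIsometry.star_mul_eq_zero_of_sum_mul_star_self_eq_one
      (fun a => hpi a k) (by simpa using hUt k k) hij
  · exact IsPartialIsometry.star_mul_eq_zero_of_sum_mul_star_self_eq_one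
      (fun x => hpi k x) (by simpa using hUU k k) hij
end

section
/- Let A be a unital C*-algebra and let U = (u_{a,x})_{a,x=1}^n be a bi-unitary matrix over A whose entries satisfy u_{a,x} u_{a,y}^* = 0 for x ≠ y and u_{a,x} u_{b,x}^* = 0 for a ≠ b. For each a set v_a = Σ_{x=1}^n u_{a,x}^*. Then each v_a is a unitary element of A, and for every a, x the element p_{a,x} := v_a u_{a,x} equals u_{a,x}^* u_{a,x} and is a projection. -/
/-!
Fix a row `w = u a`. Orthogonality within each column and `U^* U = 1` give
`w x w_x^* w y = w x (Σ_b u_{b,x}^* u_{b,y}) = 0` for `x ≠ y`, so multiplying `Σ_y w y w_y^* = 1`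
by `w x` shows that every `w x` is a partial isometry, whence `w_x^* w y = 0` for `x ≠ y`. All cross
terms then vanish in `v_a^* v_a`, `v_a v_a^*` and `v_a w x`, and `w_x^* w x` is a projection.
-/

open Finset

theorem Fintype.sum_mul_sum_of_mul_eq_zero {R ι : Type*} [Semiring R] [Fintype ι] {f g : ι → R}
    (h : ∀ i j, i ≠ j → f i * g j = 0) : (∑ i, f i) * ∑ j, g j = ∑ i, f i * g i := by
  rw [Fintype.sum_mul_sum]
  exact Finset.sum_congr rfl fun i _ ↦ Fintype.sum_eq_single i fun j hj ↦ h i j hj.symm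

section StarRing

variable {R ι κ : Type*} [Semiring R] [StarRing R]

theorem isStarProjection_star_mul_self_of_mul_star_mul_self {u : R} (hu : u * star u * u = u) :
    IsStarProjection (star u * u) where
  isIdempotentElem := by rw [IsIdempotentElem, mul_assoc, ← mul_assoc u, hu]
  isSelfAdjoint := .star_mul_self u

theorem star_mul_eq_zero_of_mul_star_mul_eq_zero {u w : R} (hu : u * star u * u = u)
    (h : u * star u * w = 0) : star u * w = 0 := by
  have hu' : star u * u * star u = star u := by
    simpa only [star_mul, star_star, mul_assoc] using congrArg star hu
  calc star u * w = star u * (u * star u * w) := by rw [← mul_assoc, ← mul_assoc, hu']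
    _ = 0 := by rw [h, mul_zero]

theorem mul_star_mul_eq_zero_of_column_orthogonal [Fintype κ] {u : κ → ι → R} {x y : ι}
    (hcol : ∀ a b, a ≠ b → u a x * star (u b x) = 0)
    (horth : ∑ b, star (u b x) * u b y = 0) (a : κ) : u a x * star (u a x) * u a y = 0 :=
  calc u a x * star (u a x) * u a y = ∑ b, u a x * star (u b x) * u b y := by
        rw [Fintype.sum_eq_single a fun b hb ↦ by rw [hcol a b hb.symm, zero_mul]]
    _ = u a x * ∑ b, star (u b x) * u b y := by simp only [mul_sum, mul_assoc]
    _ = 0 := by rw [horth, mul_zero]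

section Row

variable [Fintype ι] {w : ι → R} (hsum : ∑ x, w x * star (w x) = 1)
  (hkill : ∀ x y, x ≠ y → w x * star (w x) * w y = 0)
include hsum hkill

theorem mul_star_mul_self_of_sum_mul_star_eq_one (x : ι) : w x * star (w x) * w x = w x :=
  calc w x * star (w x) * w x = ∑ y, w y * star (w y) * w x := by
        rw [Fintype.sum_eq_single x fun y hy ↦ hkill y x hy]
    _ = w x := by rw [← sum_mul, hsum, one_mul]

theorem star_mul_eq_zero_of_sum_mul_star_eq_one {x y : ι} (hxy : x ≠ y) : star (w x) * w y = 0 :=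
  star_mul_eq_zero_of_mul_star_mul_eq_zero (mul_star_mul_self_of_sum_mul_star_eq_one hsum hkill x)
    (hkill x y hxy)

end Row

end StarRing

theorem stmt2_general {A : Type*} [NormedRing A] [StarRing A]
    (n : ℕ) (u : Fin n → Fin n → A)
    (hUU : ∀ a b : Fin n, ∑ x, u a x * star (u b x) = if a = b then 1 else 0)
    (hUU' : ∀ x y : Fin n, ∑ a, star (u a x) * u a y = if x = y then 1 else 0)
    (hUt' : ∀ a b : Fin n, ∑ x, star (u a x) * u b x = if a = b then 1 else 0)
    (hrow : ∀ (a : Fin n) {x y : Fin n}, x ≠ y → u a x * star (u a y) = 0)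
    (hcol : ∀ (x : Fin n) {a b : Fin n}, a ≠ b → u a x * star (u b x) = 0)
    (v : Fin n → A) (hv : ∀ a, v a = ∑ x, star (u a x)) :
    ∀ a x : Fin n,
      star (v a) * v a = 1 ∧ v a * star (v a) = 1 ∧
      v a * u a x = star (u a x) * u a x ∧
      (v a * u a x) * (v a * u a x) = v a * u a x ∧
      star (v a * u a x) = v a * u a x := by
  intro a x
  have hsum : ∑ y, u a y * star (u a y) = 1 := by simpa using hUU a a
  have hkill : ∀ y z, y ≠ z → u a y * star (u a y) * u a z = 0 := fun y z hyz ↦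
    mul_star_mul_eq_zero_of_column_orthogonal (fun _ _ ↦ hcol y) (by simpa [hyz] using hUU' y z) a
  have horth : ∀ {y z}, y ≠ z → star (u a y) * u a z = 0 :=
    star_mul_eq_zero_of_sum_mul_star_eq_one hsum hkill
  have hstar : star (v a) = ∑ y, u a y := by simp [hv, star_sum]
  have hp : v a * u a x = star (u a x) * u a x := by
    rw [hv, sum_mul, Fintype.sum_eq_single x fun y hy ↦ horth hy]
  have hproj := isStarProjection_star_mul_self_of_mul_star_mul_self
    (mul_star_mul_self_of_sum_mul_star_eq_one hsum hkill x)
  refine ⟨?_, ?_, hp, hp ▸ hproj.isIdempotentElem, hp ▸ hproj.isSelfAdjoint⟩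
  · rw [hstar, hv, Fintype.sum_mul_sum_of_mul_eq_zero fun _ _ ↦ hrow a, hsum]
  · rw [hstar, hv, Fintype.sum_mul_sum_of_mul_eq_zero fun _ _ ↦ horth]
    simpa using hUt' a a

/-- the row sums v_a = Σ_x u_{a,x}^* are unitary and
v_a u_{a,x} = u_{a,x}^* u_{a,x} is a projection. -/
theorem stmt2 {A : Type*} [NormedRing A] [StarRing A] [CStarRing A]
    [CompleteSpace A] [NormedAlgebra ℂ A] [StarModule ℂ A]
    (n : ℕ) (u : Fin n → Fin n → A)
    (hUU : ∀ a b : Fin n, ∑ x, u a x * star (u b x) = if a = b then 1 else 0)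
    (hUU' : ∀ x y : Fin n, ∑ a, star (u a x) * u a y = if x = y then 1 else 0)
    (hUt : ∀ x y : Fin n, ∑ a, u a x * star (u a y) = if x = y then 1 else 0)
    (hUt' : ∀ a b : Fin n, ∑ x, star (u a x) * u b x = if a = b then 1 else 0)
    (hrow : ∀ (a : Fin n) {x y : Fin n}, x ≠ y → u a x * star (u a y) = 0)
    (hcol : ∀ (x : Fin n) {a b : Fin n}, a ≠ b → u a x * star (u b x) = 0)
    (v : Fin n → A) (hv : ∀ a, v a = ∑ x, star (u a x)) :
    ∀ a x : Fin n,
      star (v a) * v a = 1 ∧ v a * star (v a) = 1 ∧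
      v a * u a x = star (u a x) * u a x ∧
      (v a * u a x) * (v a * u a x) = v a * u a x ∧
      star (v a * u a x) = v a * u a x :=
  stmt2_general n u hUU hUU' hUt' hrow hcol v hv
end

section
/- Let A be a unital C*-algebra and let U = (u_{a,x})_{a,x=1}^n be a bi-unitary matrix over A whose entries satisfy u_{a,x} u_{a,y}^* = 0 for x ≠ y and u_{a,x} u_{b,x}^* = 0 for a ≠ b. Setting p_{a,x} = u_{a,x}^* u_{a,x}, the matrix (p_{a,x})_{a,x=1}^n is a magic unitary: each p_{a,x} is a projection and Σ_a p_{a,x} = 1 = Σ_x p_{a,x} for all a, x. -/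
/-! A row of `U` that is orthogonal in the sense `u a x * star (u a y) = 0` (for `x ≠ y`) and whose
entries satisfy `∑ x, star (u a x) * u a x = 1` consists of partial isometries, since
`u a x = u a x * ∑ y, star (u a y) * u a y = u a x * star (u a x) * u a x`.
The source projection `star v * v` of a partial isometry `v` is a projection, and the two sum
conditions are the diagonal entries of `Uᴴ U = 1` and `(Uᵀ)ᴴ Uᵀ = 1`. -/

open Finset

lemma IsStarProjection.star_mul_self_of_mul_star_mul_self {R : Type*} [Semigroup R] [StarMul R]
    {v : R} (hv : v * star v * v = v) : IsStarProjection (star v * v) where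
  isIdempotentElem := by
    rw [IsIdempotentElem, mul_assoc, ← mul_assoc v, hv]
  isSelfAdjoint := .star_mul_self v

lemma mul_star_mul_self_of_sum_star_mul_self_eq_one {R ι : Type*} [Semiring R] [Star R]
    [Fintype ι] {v : ι → R} (hsum : ∑ y, star (v y) * v y = 1) {x : ι}
    (horth : ∀ {y}, x ≠ y → v x * star (v y) = 0) : v x * star (v x) * v x = v x :=
  calc v x * star (v x) * v x = ∑ y, v x * star (v y) * v y := by
        rw [sum_eq_single x (fun y _ hy => by rw [horth hy.symm, zero_mul]) (by simp)]
    _ = v x := by simp only [mul_assoc, ← mul_sum, hsum, mul_one]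

theorem stmt3_general {A : Type*} [NormedRing A] [StarRing A]
    (n : ℕ) (u : Fin n → Fin n → A)
    (hUU' : ∀ x y : Fin n, ∑ a, star (u a x) * u a y = if x = y then 1 else 0)
    (hUt' : ∀ a b : Fin n, ∑ x, star (u a x) * u b x = if a = b then 1 else 0)
    (hrow : ∀ (a : Fin n) {x y : Fin n}, x ≠ y → u a x * star (u a y) = 0)
    (p : Fin n → Fin n → A) (hp : ∀ a x, p a x = star (u a x) * u a x) :
    (∀ a x, p a x * p a x = p a x ∧ star (p a x) = p a x) ∧
    (∀ x, ∑ a, p a x = 1) ∧ (∀ a, ∑ x, p a x = 1) := by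
  simp only [hp]
  refine ⟨fun a x => ?_, fun x => by simp only [hUU', if_true], fun a => by simp only [hUt', if_true]⟩
  have hrow_sum : ∑ y, star (u a y) * u a y = 1 := by simp only [hUt', if_true]
  have hproj := IsStarProjection.star_mul_self_of_mul_star_mul_self
    (mul_star_mul_self_of_sum_star_mul_self_eq_one hrow_sum (x := x) (hrow a))
  exact ⟨hproj.isIdempotentElem, hproj.isSelfAdjoint⟩

/-- (u_{a,x}^* u_{a,x}) is a magic unitary. -/
theorem stmt3 {A : Type*} [NormedRing A] [StarRing A] [CStarRing A]
    [CompleteSpace A] [NormedAlgebra ℂ A] [StarModule ℂ A]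
    (n : ℕ) (u : Fin n → Fin n → A)
    (hUU : ∀ a b : Fin n, ∑ x, u a x * star (u b x) = if a = b then 1 else 0)
    (hUU' : ∀ x y : Fin n, ∑ a, star (u a x) * u a y = if x = y then 1 else 0)
    (hUt : ∀ x y : Fin n, ∑ a, u a x * star (u a y) = if x = y then 1 else 0)
    (hUt' : ∀ a b : Fin n, ∑ x, star (u a x) * u b x = if a = b then 1 else 0)
    (hrow : ∀ (a : Fin n) {x y : Fin n}, x ≠ y → u a x * star (u a y) = 0)
    (hcol : ∀ (x : Fin n) {a b : Fin n}, a ≠ b → u a x * star (u b x) = 0)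
    (p : Fin n → Fin n → A) (hp : ∀ a x, p a x = star (u a x) * u a x) :
    (∀ a x, p a x * p a x = p a x ∧ star (p a x) = p a x) ∧
    (∀ x, ∑ a, p a x = 1) ∧ (∀ a, ∑ x, p a x = 1) :=
  stmt3_general n u hUU' hUt' hrow p hp
end

section
/- Let A, B, C, D be n×n complex flat unitary matrices (unitary matrices all of whose entries have modulus 1/√n). For j,k ∈ {1,…,n} define vectors ψ_{jk} = √n (a_{1j} b_{1k}, …, a_{nj} b_{nk})^T and φ_{jk} = √n (c_{1j} d_{1k}, …, c_{nj} d_{nk})^T in ℂⁿ. Then the block matrix W = (w_{jk})_{j,k=1}^n with w_{jk} = ψ_{jk} φ_{jk}^* ∈ M_n(ℂ) is bi-unitary: Σ_i w_{ij}^* w_{ik} = δ_{jk} I and Σ_i w_{ji}^* w_{ki} = δ_{jk} I for all j, k. -/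
open Matrix Complex

/-! Since `w_{ij}^* w_{ik} = ⟨ψ_{ij}, ψ_{ik}⟩ φ_{ij} φ_{ik}^*`, block unitarity splits into two
facts. Flatness of `A` makes every `√n a_{li}` unimodular, so
`⟨ψ_{ij}, ψ_{ik}⟩ = (B^* B)_{jk} = δ_{jk}`; flatness of `D` together with `C C^* = 1` gives
`∑_i φ_{ij} φ_{ij}^* = 1`. Exchanging `A ↔ B` and `C ↔ D` transposes `W` blockwise, which yields
the unitarity of the block transpose. -/

section BlockUnitary

variable {ι m R : Type*} [CommSemiring R] [StarRing R]

/-- Unitarity of the block matrix whose `(j, k)` block is `w j k`. -/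
def IsBlockUnitary [Fintype ι] [DecidableEq ι] [Fintype m] [DecidableEq m]
    (w : ι → ι → Matrix m m R) : Prop :=
  ∀ j k, ∑ i, star (w i j) * w i k = if j = k then 1 else 0

theorem dotProduct_star_mul_mul_of_star_mul_self [Fintype m] {u : m → R}
    (hu : ∀ p, star (u p) * u p = 1) (v w : m → R) : star (u * v) ⬝ᵥ (u * w) = star v ⬝ᵥ w := by
  refine Finset.sum_congr rfl fun p _ => ?_
  calc star (u p * v p) * (u p * w p) = (star (u p) * u p) * (star (v p) * w p) := by
        rw [star_mul']; ring
    _ = star (v p) * w p := by rw [hu p, one_mul]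

theorem sum_vecMulVec_col_mul_star_eq_one [Fintype ι] [DecidableEq m] {C : Matrix m ι R}
    (hC : C * Cᴴ = 1) {d : m → R} (hd : ∀ p, d p * star (d p) = 1) :
    ∑ i, vecMulVec (Cᵀ i * d) (star (Cᵀ i * d)) = 1 := by
  ext l l'
  have hCll' := congrFun (congrFun hC l) l'
  rw [mul_apply] at hCll'
  calc (∑ i, vecMulVec (Cᵀ i * d) (star (Cᵀ i * d))) l l'
      = d l * star (d l') * ∑ i, C l i * Cᴴ i l' := by
        simp only [Matrix.sum_apply, vecMulVec_apply, Finset.mul_sum, Pi.mul_apply, Pi.star_apply,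
          transpose_apply, conjTranspose_apply, star_mul']
        exact Finset.sum_congr rfl fun i _ => by ring
    _ = (1 : Matrix m m R) l l' := by
        rw [hCll', one_apply]
        split_ifs with h
        · rw [h, hd, mul_one]
        · rw [mul_zero]

theorem isBlockUnitary_vecMulVec [Fintype ι] [DecidableEq ι] [Fintype m] [DecidableEq m]
    {ψ φ : ι → ι → m → R}
    (hψ : ∀ i j k, star (ψ i j) ⬝ᵥ ψ i k = (1 : Matrix ι ι R) j k)
    (hφ : ∀ j, ∑ i, vecMulVec (φ i j) (star (φ i j)) = 1) :
    IsBlockUnitary fun j k => vecMulVec (ψ j k) (star (φ j k)) := by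
  intro j k
  have hblock : ∀ i, star (vecMulVec (ψ i j) (star (φ i j))) * vecMulVec (ψ i k) (star (φ i k))
      = (1 : Matrix ι ι R) j k • vecMulVec (φ i j) (star (φ i k)) := fun i => by
    rw [star_eq_conjTranspose, conjTranspose_vecMulVec, star_star, vecMulVec_mul_vecMulVec, hψ,
      vecMulVec_smul]
  simp only [hblock, one_apply]
  split_ifs with h
  · subst h
    simp only [one_smul, hφ]
  · simp only [zero_smul, Finset.sum_const_zero]

end BlockUnitary

section Flat

variable {n : ℕ}

theorem star_mul_self_sqrt_mul_eq_one (hn : n ≠ 0) {z : ℂ} (hz : ‖z‖ = 1 / Real.sqrt n) :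
    star ((Real.sqrt n : ℂ) * z) * ((Real.sqrt n : ℂ) * z) = 1 := by
  have hnorm : ‖(Real.sqrt n : ℂ) * z‖ = 1 := by
    rw [norm_mul, hz, Complex.norm_real, Real.norm_eq_abs, abs_of_nonneg (Real.sqrt_nonneg _),
      mul_one_div_cancel (Real.sqrt_ne_zero'.mpr (by positivity))]
  rw [star_def, conj_mul', hnorm]
  norm_num

noncomputable def scaledColProduct (A B : Matrix (Fin n) (Fin n) ℂ) (j k : Fin n) : Fin n → ℂ :=
  fun l => (Real.sqrt n : ℂ) * (A l j * B l k)

theorem scaledColProduct_comm (A B : Matrix (Fin n) (Fin n) ℂ) (j k : Fin n) :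
    scaledColProduct A B j k = scaledColProduct B A k j := by
  funext l
  simp only [scaledColProduct, mul_comm (A l j)]

theorem dotProduct_star_scaledColProduct {A B : Matrix (Fin n) (Fin n) ℂ}
    (hA : ∀ i j, ‖A i j‖ = 1 / Real.sqrt n) (hB : B ∈ unitaryGroup (Fin n) ℂ) (i j k : Fin n) :
    star (scaledColProduct A B i j) ⬝ᵥ scaledColProduct A B i k = (1 : Matrix _ _ ℂ) j k := by
  have hcol : ∀ j, scaledColProduct A B i j = (fun l => (Real.sqrt n : ℂ) * A l i) * Bᵀ j :=
    fun j => funext fun l => (mul_assoc _ _ _).symm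
  rw [hcol, hcol, dotProduct_star_mul_mul_of_star_mul_self
    (fun p => star_mul_self_sqrt_mul_eq_one p.pos.ne' (hA p i)), ← mem_unitaryGroup_iff'.mp hB]
  rfl

theorem sum_vecMulVec_scaledColProduct {C D : Matrix (Fin n) (Fin n) ℂ}
    (hC : C ∈ unitaryGroup (Fin n) ℂ) (hD : ∀ i j, ‖D i j‖ = 1 / Real.sqrt n) (j : Fin n) :
    ∑ i, vecMulVec (scaledColProduct C D i j) (star (scaledColProduct C D i j)) = 1 := by
  have hcol : ∀ i, scaledColProduct C D i j = Cᵀ i * fun l => (Real.sqrt n : ℂ) * D l j :=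
    fun i => funext fun l => mul_left_comm _ _ _
  simp only [hcol]
  refine sum_vecMulVec_col_mul_star_eq_one (mem_unitaryGroup_iff.mp hC) fun p => ?_
  rw [mul_comm]
  exact star_mul_self_sqrt_mul_eq_one p.pos.ne' (hD p j)

theorem isBlockUnitary_scaledColProduct {A B C D : Matrix (Fin n) (Fin n) ℂ}
    (hA : ∀ i j, ‖A i j‖ = 1 / Real.sqrt n) (hB : B ∈ unitaryGroup (Fin n) ℂ)
    (hC : C ∈ unitaryGroup (Fin n) ℂ) (hD : ∀ i j, ‖D i j‖ = 1 / Real.sqrt n) :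
    IsBlockUnitary fun j k =>
      vecMulVec (scaledColProduct A B j k) (star (scaledColProduct C D j k)) :=
  isBlockUnitary_vecMulVec (dotProduct_star_scaledColProduct hA hB)
    (sum_vecMulVec_scaledColProduct hC hD)

end Flat

theorem stmt5_general (n : ℕ)
    (A B C D : Matrix (Fin n) (Fin n) ℂ)
    (hA : A ∈ Matrix.unitaryGroup (Fin n) ℂ)
    (hB : B ∈ Matrix.unitaryGroup (Fin n) ℂ)
    (hC : C ∈ Matrix.unitaryGroup (Fin n) ℂ)
    (hD : D ∈ Matrix.unitaryGroup (Fin n) ℂ)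
    (hAflat : ∀ i j, ‖A i j‖ = 1 / Real.sqrt n)
    (hBflat : ∀ i j, ‖B i j‖ = 1 / Real.sqrt n)
    (hCflat : ∀ i j, ‖C i j‖ = 1 / Real.sqrt n)
    (hDflat : ∀ i j, ‖D i j‖ = 1 / Real.sqrt n)
    (ψ φ : Fin n → Fin n → Fin n → ℂ)
    (hψ : ∀ j k l, ψ j k l = (Real.sqrt n : ℂ) * (A l j * B l k))
    (hφ : ∀ j k m, φ j k m = (Real.sqrt n : ℂ) * (C m j * D m k))
    (w : Fin n → Fin n → Matrix (Fin n) (Fin n) ℂ)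
    (hw : ∀ j k, w j k = Matrix.of (fun l m => ψ j k l * star (φ j k m))) :
    (∀ j k, ∑ i, star (w i j) * w i k = if j = k then (1 : Matrix (Fin n) (Fin n) ℂ) else 0) ∧
    (∀ j k, ∑ i, star (w j i) * w k i = if j = k then (1 : Matrix (Fin n) (Fin n) ℂ) else 0) := by
  obtain rfl : ψ = scaledColProduct A B := funext fun j => funext fun k => funext (hψ j k)
  obtain rfl : φ = scaledColProduct C D := funext fun j => funext fun k => funext (hφ j k)
  obtain rfl : w = fun j k =>
      vecMulVec (scaledColProduct A B j k) (star (scaledColProduct C D j k)) := funext fun j => funext (hw j)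
  refine ⟨isBlockUnitary_scaledColProduct hAflat hB hC hDflat, ?_⟩
  have h := isBlockUnitary_scaledColProduct hBflat hA hD hCflat
  simp only [scaledColProduct_comm B A, scaledColProduct_comm D C] at h
  exact h

/-- the Latin-square-type block matrix built from four flat
unitaries is bi-unitary. -/
theorem stmt5 (n : ℕ) (hn : 0 < n)
    (A B C D : Matrix (Fin n) (Fin n) ℂ)
    (hA : A ∈ Matrix.unitaryGroup (Fin n) ℂ)
    (hB : B ∈ Matrix.unitaryGroup (Fin n) ℂ)
    (hC : C ∈ Matrix.unitaryGroup (Fin n) ℂ)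
    (hD : D ∈ Matrix.unitaryGroup (Fin n) ℂ)
    (hAflat : ∀ i j, ‖A i j‖ = 1 / Real.sqrt n)
    (hBflat : ∀ i j, ‖B i j‖ = 1 / Real.sqrt n)
    (hCflat : ∀ i j, ‖C i j‖ = 1 / Real.sqrt n)
    (hDflat : ∀ i j, ‖D i j‖ = 1 / Real.sqrt n)
    (ψ φ : Fin n → Fin n → Fin n → ℂ)
    (hψ : ∀ j k l, ψ j k l = (Real.sqrt n : ℂ) * (A l j * B l k))
    (hφ : ∀ j k m, φ j k m = (Real.sqrt n : ℂ) * (C m j * D m k))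
    (w : Fin n → Fin n → Matrix (Fin n) (Fin n) ℂ)
    (hw : ∀ j k, w j k = Matrix.of (fun l m => ψ j k l * star (φ j k m))) :
    (∀ j k, ∑ i, star (w i j) * w i k = if j = k then (1 : Matrix (Fin n) (Fin n) ℂ) else 0) ∧
    (∀ j k, ∑ i, star (w j i) * w k i = if j = k then (1 : Matrix (Fin n) (Fin n) ℂ) else 0) :=
  stmt5_general n A B C D hA hB hC hD hAflat hBflat hCflat hDflat ψ φ hψ hφ w hw
end

section
/- Let G₁, G₂ be finite simple graphs with |V(G₁)| = |V(G₂)| = n, let A be a unital C*-algebra, and let U = (u_{a,x})_{a ∈ V(G₂), x ∈ V(G₁)} be a bi-unitary matrix over A satisfying u_{a,x} u_{b,y}^* = 0 whenever (a ~ b in G₂ and x ≁ y in G₁) or (a ≁ b in G₂ and x ~ y in G₁), where no vertex is adjacent to itself. If x ∈ V(G₁) has degree j, a ∈ V(G₂) has degree k, and j ≠ k, then u_{a,x} = 0. -/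
/-!
The elements `P b y = u_{b,y}^* u_{b,y}` form a matrix whose rows and columns all sum to `1`,
and the orthogonality relations make `u_{a,x} P b y = 0` unless `a ∼ b ↔ x ∼ y`. Summing
`u_{a,x} P b y` over `y ∼ x` and `b ∼ a` in either order therefore gives
`deg x • u_{a,x} = deg a • u_{a,x}`, and `ℕ`-torsion-freeness of a complex algebra finishes.
-/

open Finset

theorem card_nsmul_eq_card_nsmul_of_mul_eq_zero {R ι κ : Type*} [Semiring R]
    [Fintype ι] [Fintype κ] (P : ι → κ → R)
    (hrow : ∀ b, ∑ y, P b y = 1) (hcol : ∀ y, ∑ b, P b y = 1)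
    (c : R) (s : Finset κ) (t : Finset ι)
    (hc : ∀ b y, (b ∈ t ↔ y ∉ s) → c * P b y = 0) :
    #s • c = #t • c := by
  have hs : ∀ y ∈ s, ∑ b ∈ t, c * P b y = c := fun y hy => by
    rw [sum_subset (subset_univ t) fun b _ hb => hc b y (by tauto), ← mul_sum, hcol, mul_one]
  have ht : ∀ b ∈ t, ∑ y ∈ s, c * P b y = c := fun b hb => by
    rw [sum_subset (subset_univ s) fun y _ hy => hc b y (by tauto), ← mul_sum, hrow, mul_one]
  calc #s • c = ∑ y ∈ s, ∑ b ∈ t, c * P b y := by rw [sum_congr rfl hs, sum_const]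
    _ = ∑ b ∈ t, ∑ y ∈ s, c * P b y := sum_comm
    _ = #t • c := by rw [sum_congr rfl ht, sum_const]

theorem degree_nsmul_eq_degree_nsmul {A V W : Type*} [Semiring A] [Star A]
    [Fintype V] [Fintype W] (G₁ : SimpleGraph V) (G₂ : SimpleGraph W)
    [DecidableRel G₁.Adj] [DecidableRel G₂.Adj] (u : W → V → A)
    (hcol : ∀ y, ∑ a, star (u a y) * u a y = 1)
    (hrow : ∀ a, ∑ x, star (u a x) * u a x = 1)
    (horth : ∀ a b x y, ((G₂.Adj a b ∧ ¬ G₁.Adj x y) ∨ (¬ G₂.Adj a b ∧ G₁.Adj x y)) →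
      u a x * star (u b y) = 0)
    (x : V) (a : W) :
    G₁.degree x • u a x = G₂.degree a • u a x := by
  refine card_nsmul_eq_card_nsmul_of_mul_eq_zero (fun b y => star (u b y) * u b y) hrow hcol
    _ _ _ fun b y hby => ?_
  rw [← mul_assoc, horth a b x y (by simp only [SimpleGraph.mem_neighborFinset] at hby; tauto),
    zero_mul]

theorem stmt7_general {A : Type*} [NormedRing A] [StarRing A]
    [NormedAlgebra ℂ A]
    (n : ℕ) (G₁ G₂ : SimpleGraph (Fin n))
    [DecidableRel G₁.Adj] [DecidableRel G₂.Adj]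
    (u : Fin n → Fin n → A)
    -- u a x : a a vertex of G₂, x a vertex of G₁; bi-unitarity:
    (hUU' : ∀ x y : Fin n, ∑ a, star (u a x) * u a y = if x = y then 1 else 0)
    (hUt' : ∀ a b : Fin n, ∑ x, star (u a x) * u b x = if a = b then 1 else 0)
    -- orthogonality conditions
    (horth : ∀ a b x y : Fin n,
      ((G₂.Adj a b ∧ ¬ G₁.Adj x y) ∨ (¬ G₂.Adj a b ∧ G₁.Adj x y)) →
      u a x * star (u b y) = 0)
    (x a : Fin n) (j k : ℕ) (hx : G₁.degree x = j) (ha : G₂.degree a = k)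
    (hjk : j ≠ k) :
    u a x = 0 := by
  have hdeg := degree_nsmul_eq_degree_nsmul G₁ G₂ u (fun y => by simpa using hUU' y y)
    (fun a => by simpa using hUt' a a) horth x a
  rw [hx, ha, ← Nat.cast_smul_eq_nsmul ℂ, ← Nat.cast_smul_eq_nsmul ℂ] at hdeg
  by_contra hu
  exact hjk (by exact_mod_cast smul_left_injective ℂ hu hdeg)

/-- entries of a bi-unitary intertwiner between two graphs vanish
when the corresponding vertices have different degrees. -/
theorem stmt7 {A : Type*} [NormedRing A] [StarRing A] [CStarRing A]
    [CompleteSpace A] [NormedAlgebra ℂ A] [StarModule ℂ A]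
    (n : ℕ) (G₁ G₂ : SimpleGraph (Fin n))
    [DecidableRel G₁.Adj] [DecidableRel G₂.Adj]
    (u : Fin n → Fin n → A)
    -- u a x : a a vertex of G₂, x a vertex of G₁; bi-unitarity:
    (hUU : ∀ a b : Fin n, ∑ x, u a x * star (u b x) = if a = b then 1 else 0)
    (hUU' : ∀ x y : Fin n, ∑ a, star (u a x) * u a y = if x = y then 1 else 0)
    (hUt : ∀ x y : Fin n, ∑ a, u a x * star (u a y) = if x = y then 1 else 0)
    (hUt' : ∀ a b : Fin n, ∑ x, star (u a x) * u b x = if a = b then 1 else 0)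
    -- orthogonality conditions
    (horth : ∀ a b x y : Fin n,
      ((G₂.Adj a b ∧ ¬ G₁.Adj x y) ∨ (¬ G₂.Adj a b ∧ G₁.Adj x y)) →
      u a x * star (u b y) = 0)
    (x a : Fin n) (j k : ℕ) (hx : G₁.degree x = j) (ha : G₂.degree a = k)
    (hjk : j ≠ k) :
    u a x = 0 :=
  stmt7_general n G₁ G₂ u hUU' hUt' horth x a j k hx ha hjk
end

section
/- Let G₁, G₂ be finite simple graphs with |V(G₁)| = |V(G₂)| = n and suppose there exists, in some unital C*-algebra A with A ≠ 0, a bi-unitary matrix U = (u_{a,x}) indexed by V(G₂) × V(G₁) satisfying the orthogonality conditions u_{a,x} u_{b,y}^* = 0 whenever exactly one of the relations (a ~ b in G₂) and (x ~ y in G₁) holds. Then for every k, the number of vertices of degree k in G₁ equals the number of vertices of degree k in G₂. -/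
/-!
Put `e a x = (u a x)⋆ * u a x`. These are positive elements whose row and column sums are all
`1`, and the orthogonality conditions give `e a x * e b y = 0` unless `a ~ b ↔ x ~ y`. Expanding
`deg a = ∑ b, [a ~ b] * ∑ y, e b y` and trading the adjacency of `a, b` for that of `x, y`
yields `∑ a, deg₂ a * e a x = deg₁ x` and, symmetrically, `∑ x, deg₁ x * e a x = deg₂ a`.
With `c = deg₁ x - deg₂ a` the sum `∑ a, ∑ x, (u a x * c)⋆ * (u a x * c) = ∑ a, ∑ x, c * e a x * c`
then vanishes, so in the C*-algebra `u a x = 0` whenever the degrees differ. Summing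
`[deg₁ x = k] * e a x = [deg₂ a = k] * e a x` over all `a, x` counts both degree classes.
-/

open Finset

section

variable {ι κ R : Type*} [Fintype ι] [Fintype κ]

theorem sum_natCast_degree_mul_eq [Semiring R] (G₂ : SimpleGraph ι) (G₁ : SimpleGraph κ)
    [DecidableRel G₂.Adj] [DecidableRel G₁.Adj] {e : ι → κ → R}
    (hrow : ∀ x, ∑ a, e a x = 1) (hcol : ∀ a, ∑ x, e a x = 1)
    (horth : ∀ a b x y, Xor (G₂.Adj a b) (G₁.Adj x y) → e a x * e b y = 0) (x : κ) :
    ∑ a, (G₂.degree a : R) * e a x = G₁.degree x := by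
  have hswap : ∀ a b y, (if G₂.Adj a b then e a x * e b y else 0) =
      if G₁.Adj x y then e a x * e b y else 0 := by
    intro a b y
    by_cases h₂ : G₂.Adj a b <;> by_cases h₁ : G₁.Adj x y
    · simp [h₁, h₂]
    · simp [h₁, h₂, horth a b x y (.inl ⟨h₂, h₁⟩)]
    · simp [h₁, h₂, horth a b x y (.inr ⟨h₁, h₂⟩)]
    · simp [h₁, h₂]
  calc ∑ a, (G₂.degree a : R) * e a x
      = ∑ a, ∑ b, ∑ y, if G₂.Adj a b then e a x * e b y else 0 := by
        simp only [SimpleGraph.degree_eq_sum_if_adj, sum_mul, ite_mul, one_mul, zero_mul,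
          sum_ite_irrel, sum_const_zero, ← mul_sum, hcol, mul_one]
    _ = ∑ y, ∑ a, ∑ b, if G₁.Adj x y then e a x * e b y else 0 := by
        simp_rw [hswap]
        exact (sum_congr rfl fun _ _ => sum_comm).trans sum_comm
    _ = G₁.degree x := by
        simp only [sum_ite_irrel, sum_const_zero, ← sum_mul_sum, hrow, one_mul,
          SimpleGraph.degree_eq_sum_if_adj]

theorem sum_sub_mul_mul_sub_eq_zero [Ring R] {e : ι → κ → R} {f : κ → R} {g : ι → R}
    (hrow : ∀ x, ∑ a, e a x = 1) (hcol : ∀ a, ∑ x, e a x = 1)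
    (hf : ∀ x, ∑ a, g a * e a x = f x) (hg : ∀ a, ∑ x, f x * e a x = g a) :
    ∑ a, ∑ x, (f x - g a) * e a x * (f x - g a) = 0 := by
  have hx : ∀ x, ∑ a, (f x - g a) * e a x = 0 := fun x => by
    simp [sub_mul, sum_sub_distrib, ← mul_sum, hrow, hf]
  have ha : ∀ a, ∑ x, (f x - g a) * e a x = 0 := fun a => by
    simp [sub_mul, sum_sub_distrib, ← mul_sum, hcol, hg]
  simp_rw [mul_sub, sum_sub_distrib]
  rw [sum_comm]
  simp [← sum_mul, hx, ha]

omit [Fintype ι] in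
theorem eq_zero_of_sum_star_mul_self_eq_zero [NonUnitalNormedRing R] [StarRing R] [CStarRing R]
    [PartialOrder R] [StarOrderedRing R] {s : Finset ι} {w : ι → R}
    (h : ∑ i ∈ s, star (w i) * w i = 0) {i : ι} (hi : i ∈ s) : w i = 0 :=
  (CStarRing.star_mul_self_eq_zero_iff _).mp <|
    (sum_eq_zero_iff_of_nonneg fun j _ => star_mul_self_nonneg (w j)).mp h i hi

theorem eq_zero_of_ne_of_sum_natCast_mul_star_mul_self_eq [NormedRing R] [StarRing R]
    [CStarRing R] [PartialOrder R] [StarOrderedRing R] [Algebra ℂ R] {u : ι → κ → R}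
    {f : κ → ℕ} {g : ι → ℕ}
    (hrow : ∀ x, ∑ a, star (u a x) * u a x = 1) (hcol : ∀ a, ∑ x, star (u a x) * u a x = 1)
    (hf : ∀ x, ∑ a, (g a : R) * (star (u a x) * u a x) = f x)
    (hg : ∀ a, ∑ x, (f x : R) * (star (u a x) * u a x) = g a)
    {a : ι} {x : κ} (hne : f x ≠ g a) : u a x = 0 := by
  have hsq : ∑ p : ι × κ,
      star (u p.1 p.2 * (f p.2 - g p.1)) * (u p.1 p.2 * (f p.2 - g p.1)) = 0 := by
    rw [← sum_sub_mul_mul_sub_eq_zero hrow hcol hf hg, Fintype.sum_prod_type]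
    simp [mul_assoc]
  have hc : IsUnit ((f x : R) - g a) := by
    have : ((f x : ℂ) - g a) ≠ 0 := sub_ne_zero.mpr (by exact_mod_cast hne)
    simpa using (isUnit_iff_ne_zero.mpr this).map (algebraMap ℂ R)
  exact hc.mul_left_eq_zero.mp (eq_zero_of_sum_star_mul_self_eq_zero hsq (mem_univ (a, x)))

theorem card_filter_eq_of_eq_zero_of_ne [Semiring R] [CharZero R] {e : ι → κ → R}
    (hrow : ∀ x, ∑ a, e a x = 1) (hcol : ∀ a, ∑ x, e a x = 1) {β : Type*} [DecidableEq β]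
    {f : κ → β} {g : ι → β} (hsupp : ∀ a x, f x ≠ g a → e a x = 0) (k : β) :
    #{x | f x = k} = #{a | g a = k} := by
  apply Nat.cast_injective (R := R)
  calc (#{x | f x = k} : R) = ∑ x, ∑ a, if f x = k then e a x else 0 := by
        simp [hrow]
    _ = ∑ x, ∑ a, if g a = k then e a x else 0 := by
        refine sum_congr rfl fun x _ => sum_congr rfl fun a _ => ?_
        by_cases h : f x = g a
        · rw [h]
        · simp [hsupp a x h]
    _ = #{a | g a = k} := by
        rw [sum_comm]
        simp [hcol]

end

theorem stmt8_general {A : Type*} [NormedRing A] [StarRing A] [CStarRing A]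
    [CompleteSpace A] [NormedAlgebra ℂ A] [StarModule ℂ A] [Nontrivial A]
    (n : ℕ) (G₁ G₂ : SimpleGraph (Fin n))
    [DecidableRel G₁.Adj] [DecidableRel G₂.Adj]
    (u : Fin n → Fin n → A)
    (hUU' : ∀ x y : Fin n, ∑ a, star (u a x) * u a y = if x = y then 1 else 0)
    (hUt' : ∀ a b : Fin n, ∑ x, star (u a x) * u b x = if a = b then 1 else 0)
    (horth : ∀ a b x y : Fin n,
      ((G₂.Adj a b ∧ ¬ G₁.Adj x y) ∨ (¬ G₂.Adj a b ∧ G₁.Adj x y)) →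
      u a x * star (u b y) = 0) :
    ∀ k : ℕ,
      (Finset.univ.filter fun x : Fin n => G₁.degree x = k).card =
      (Finset.univ.filter fun a : Fin n => G₂.degree a = k).card := by
  let _ : CStarAlgebra A := { }
  let _ := CStarAlgebra.spectralOrder A
  have := CStarAlgebra.spectralOrderedRing A
  have := charZero_of_injective_algebraMap (algebraMap ℂ A).injective
  set e : Fin n → Fin n → A := fun a x => star (u a x) * u a x with he
  have hrow : ∀ x, ∑ a, e a x = 1 := fun x => by simpa using hUU' x x
  have hcol : ∀ a, ∑ x, e a x = 1 := fun a => by simpa using hUt' a a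
  have horth' : ∀ a b x y, Xor (G₂.Adj a b) (G₁.Adj x y) → e a x * e b y = 0 := by
    intro a b x y h
    simp [he, mul_assoc, ← mul_assoc (u a x), horth a b x y (h.imp id And.symm)]
  have hsupp : ∀ a x, G₁.degree x ≠ G₂.degree a → e a x = 0 := fun a x hne => by
    simp [he, eq_zero_of_ne_of_sum_natCast_mul_star_mul_self_eq hrow hcol
      (sum_natCast_degree_mul_eq G₂ G₁ hrow hcol horth')
      (sum_natCast_degree_mul_eq G₁ G₂ (e := fun x a => e a x) hcol hrow
        fun x y a b h => horth' a b x y h.symm) hne]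
  exact card_filter_eq_of_eq_zero_of_ne hrow hcol hsupp

/-- existence of a bi-unitary matrix over a nonzero unital
C*-algebra satisfying the orthogonality conditions for a pair of graphs forces
the degree sequences of the two graphs to coincide. -/
theorem stmt8 {A : Type*} [NormedRing A] [StarRing A] [CStarRing A]
    [CompleteSpace A] [NormedAlgebra ℂ A] [StarModule ℂ A] [Nontrivial A]
    (n : ℕ) (G₁ G₂ : SimpleGraph (Fin n))
    [DecidableRel G₁.Adj] [DecidableRel G₂.Adj]
    (u : Fin n → Fin n → A)
    (hUU : ∀ a b : Fin n, ∑ x, u a x * star (u b x) = if a = b then 1 else 0)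
    (hUU' : ∀ x y : Fin n, ∑ a, star (u a x) * u a y = if x = y then 1 else 0)
    (hUt : ∀ x y : Fin n, ∑ a, u a x * star (u a y) = if x = y then 1 else 0)
    (hUt' : ∀ a b : Fin n, ∑ x, star (u a x) * u b x = if a = b then 1 else 0)
    (horth : ∀ a b x y : Fin n,
      ((G₂.Adj a b ∧ ¬ G₁.Adj x y) ∨ (¬ G₂.Adj a b ∧ G₁.Adj x y)) →
      u a x * star (u b y) = 0) :
    ∀ k : ℕ,
      (Finset.univ.filter fun x : Fin n => G₁.degree x = k).card =
      (Finset.univ.filter fun a : Fin n => G₂.degree a = k).card :=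
  stmt8_general n G₁ G₂ u hUU' hUt' horth
end

section
/- Let A be a unital C*-algebra containing projections p_{a,x}, a,x ∈ {1,…,n}, with Σ_a p_{a,x} = Σ_x p_{a,x} = 1, and unitaries u₁, …, u_{n-1} such that p_{b,x} u_b u_{b+1} ⋯ u_{a-1} p_{a,x} = 0 whenever b < a. Set v₁ = 1 and v_a = u_{a-1}^* ⋯ u_1^* for a > 1, and let w_{a,x} = v_a^* p_{a,x}. Then the block matrix W = (w_{a,x})_{a,x=1}^n ∈ M_n(A) is bi-unitary: Σ_a p_{a,y} v_a v_a^* p_{a,x} = δ_{x,y}·1, Σ_x w_{a,x} w_{b,x}^* = δ_{a,b}·1, Σ_x w_{a,x}^* w_{b,x} = δ_{a,b}·1, and Σ_a w_{a,x}^* w_{a,y} = δ_{x,y}·1. -/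
/-- Auxiliary: projections summing to 1 in a C*-algebra are pairwise orthogonal. -/
lemma stmt15_aux_orth {A : Type*} [CStarAlgebra A]
    {ι : Type*} [DecidableEq ι] {s : Finset ι} {p : ι → A}
    (hp : ∀ i ∈ s, p i * p i = p i ∧ star (p i) = p i)
    (hsum : ∑ i ∈ s, p i = 1)
    {i j : ι} (hi : i ∈ s) (hj : j ∈ s) (hij : j ≠ i) :
    p j * p i = 0 := by
  letI := CStarAlgebra.spectralOrder A
  haveI := CStarAlgebra.spectralOrderedRing A
  have hterm : ∀ k ∈ s, p i * p k * p i = star (p k * p i) * (p k * p i) := by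
    intro k hk
    rw [star_mul, (hp k hk).2, (hp i hi).2]
    have h : p i * p k * (p k * p i) = p i * (p k * p k) * p i := by noncomm_ring
    rw [h, (hp k hk).1]
  have h1 : ∑ k ∈ s, p i * p k * p i = p i := by
    rw [← Finset.sum_mul, ← Finset.mul_sum, hsum, mul_one, (hp i hi).1]
  have h2 : (∑ k ∈ s.erase i, p i * p k * p i) + p i * p i * p i = p i := by
    rw [Finset.sum_erase_add s _ hi]; exact h1
  have h3 : ∑ k ∈ s.erase i, p i * p k * p i = 0 := by
    have : p i * p i * p i = p i := by rw [(hp i hi).1, (hp i hi).1]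
    rw [this] at h2
    exact add_right_cancel (h2.trans (zero_add (p i)).symm)
  have hnn : ∀ k ∈ s.erase i, (0 : A) ≤ p i * p k * p i := by
    intro k hk
    rw [hterm k (Finset.mem_of_mem_erase hk)]
    exact star_mul_self_nonneg _
  have hz : p i * p j * p i = 0 :=
    (Finset.sum_eq_zero_iff_of_nonneg hnn).mp h3 j (Finset.mem_erase.mpr ⟨hij, hj⟩)
  have : star (p j * p i) * (p j * p i) = 0 := by
    rw [← hterm j hj]; exact hz
  exact CStarRing.star_mul_self_eq_zero_iff _ |>.mp this

/-- from a magic unitary (p_{a,x}) and unitaries u₁,…,u_{n-1}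
with p_{b,x} u_b⋯u_{a-1} p_{a,x} = 0 for b < a, the matrix
W = (v_a^* p_{a,x}) is bi-unitary, where v₁ = 1, v_a = u_{a-1}^*⋯u_1^*
(so that v_b v_a^* = u_b⋯u_{a-1} for b < a).  Indices range over {1,…,n}. -/
theorem stmt15 {A : Type*} [NormedRing A] [StarRing A] [CStarRing A]
    [CompleteSpace A] [NormedAlgebra ℂ A] [StarModule ℂ A]
    (n : ℕ) (hn : 0 < n)
    (p : ℕ → ℕ → A) (u : ℕ → A)
    -- p_{a,x} are projections
    (hproj : ∀ a ∈ Finset.Icc 1 n, ∀ x ∈ Finset.Icc 1 n,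
      p a x * p a x = p a x ∧ star (p a x) = p a x)
    -- rows and columns sum to 1
    (hrow : ∀ x ∈ Finset.Icc 1 n, ∑ a ∈ Finset.Icc 1 n, p a x = 1)
    (hcol : ∀ a ∈ Finset.Icc 1 n, ∑ x ∈ Finset.Icc 1 n, p a x = 1)
    -- u₁, …, u_{n-1} are unitaries
    (hu : ∀ i ∈ Finset.Icc 1 (n - 1), star (u i) * u i = 1 ∧ u i * star (u i) = 1)
    -- v₁ = 1, v_{a+1} = u_a^* v_a, so v_a = u_{a-1}^* ⋯ u_1^*
    (v : ℕ → A) (hv1 : v 1 = 1) (hvs : ∀ a, v (a + 1) = star (u a) * v a)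
    -- orthogonality: p_{b,x} u_b ⋯ u_{a-1} p_{a,x} = 0 for b < a,
    -- expressed via u_b ⋯ u_{a-1} = v_b v_a^*
    (horth : ∀ x ∈ Finset.Icc 1 n, ∀ a ∈ Finset.Icc 1 n, ∀ b ∈ Finset.Icc 1 n,
      b < a → p b x * (v b * star (v a)) * p a x = 0)
    -- the entries of W
    (w : ℕ → ℕ → A) (hw : ∀ a x, w a x = star (v a) * p a x) :
    (∀ x ∈ Finset.Icc 1 n, ∀ y ∈ Finset.Icc 1 n,
      ∑ a ∈ Finset.Icc 1 n, p a y * v a * star (v a) * p a x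
        = if x = y then 1 else 0) ∧
    (∀ a ∈ Finset.Icc 1 n, ∀ b ∈ Finset.Icc 1 n,
      ∑ x ∈ Finset.Icc 1 n, w a x * star (w b x) = if a = b then 1 else 0) ∧
    (∀ a ∈ Finset.Icc 1 n, ∀ b ∈ Finset.Icc 1 n,
      ∑ x ∈ Finset.Icc 1 n, star (w a x) * w b x = if a = b then 1 else 0) ∧
    (∀ x ∈ Finset.Icc 1 n, ∀ y ∈ Finset.Icc 1 n,
      ∑ a ∈ Finset.Icc 1 n, star (w a x) * w a y = if x = y then 1 else 0) := by
  letI : CStarAlgebra A := ⟨⟩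
  -- v a is unitary for 1 ≤ a ≤ n
  have hvu : ∀ a, 1 ≤ a → a ≤ n → star (v a) * v a = 1 ∧ v a * star (v a) = 1 := by
    intro a
    induction a with
    | zero => intro h; omega
    | succ a ih =>
      intro h1 h2
      rcases Nat.eq_zero_or_pos a with rfl | ha
      · simp [hv1]
      · have hua := hu a (by simp only [Finset.mem_Icc]; omega)
        have hva := ih ha (by omega)
        rw [hvs]
        constructor
        · rw [star_mul, star_star]
          calc star (v a) * u a * (star (u a) * v a)
              = star (v a) * (u a * star (u a)) * v a := by noncomm_ring
            _ = 1 := by rw [hua.2, mul_one, hva.1]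
        · rw [star_mul, star_star]
          calc star (u a) * v a * (star (v a) * u a)
              = star (u a) * (v a * star (v a)) * u a := by noncomm_ring
            _ = 1 := by rw [hva.2, mul_one, hua.1]
  -- orthogonality within a row (same x, different a, b)
  have hOR : ∀ x ∈ Finset.Icc 1 n, ∀ a ∈ Finset.Icc 1 n, ∀ b ∈ Finset.Icc 1 n,
      a ≠ b → p a x * p b x = 0 := by
    intro x hx a ha b hb hab
    exact stmt15_aux_orth (p := fun a => p a x)
      (fun i hi => hproj i hi x hx) (hrow x hx) hb ha hab
  -- orthogonality within a column (same a, different x, y)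
  have hOC : ∀ a ∈ Finset.Icc 1 n, ∀ x ∈ Finset.Icc 1 n, ∀ y ∈ Finset.Icc 1 n,
      x ≠ y → p a x * p a y = 0 := by
    intro a ha x hx y hy hxy
    exact stmt15_aux_orth (p := fun x => p a x)
      (fun i hi => hproj a ha i hi) (hcol a ha) hy hx hxy
  refine ⟨?_, ?_, ?_, ?_⟩
  · -- ∑ a, p a y * v a * star (v a) * p a x
    intro x hx y hy
    have hc : ∀ a ∈ Finset.Icc 1 n, p a y * v a * star (v a) * p a x = p a y * p a x := by
      intro a ha
      simp only [Finset.mem_Icc] at ha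
      rw [mul_assoc (p a y) (v a) (star (v a)), (hvu a ha.1 ha.2).2, mul_one]
    rw [Finset.sum_congr rfl hc]
    by_cases hxy : x = y
    · subst hxy
      rw [if_pos rfl, Finset.sum_congr rfl (fun a ha => (hproj a ha x hx).1), hrow x hx]
    · rw [if_neg hxy]
      exact Finset.sum_eq_zero fun a ha => hOC a ha y hy x hx (Ne.symm hxy)
  · -- ∑ x, w a x * star (w b x)
    intro a ha b hb
    have hc : ∀ x ∈ Finset.Icc 1 n,
        w a x * star (w b x) = star (v a) * (p a x * p b x) * v b := by
      intro x hx
      rw [hw, hw, star_mul, star_star, (hproj b hb x hx).2]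
      noncomm_ring
    rw [Finset.sum_congr rfl hc]
    by_cases hab : a = b
    · subst hab
      rw [if_pos rfl]
      have hc2 : ∀ x ∈ Finset.Icc 1 n,
          star (v a) * (p a x * p a x) * v a = star (v a) * p a x * v a := by
        intro x hx; rw [(hproj a ha x hx).1]
      rw [Finset.sum_congr rfl hc2]
      have : ∑ x ∈ Finset.Icc 1 n, star (v a) * p a x * v a
          = star (v a) * (∑ x ∈ Finset.Icc 1 n, p a x) * v a := by
        rw [Finset.mul_sum, Finset.sum_mul]
      simp only [Finset.mem_Icc] at ha
      rw [this, hcol a (by simp only [Finset.mem_Icc]; omega), mul_one, (hvu a ha.1 ha.2).1]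
    · rw [if_neg hab]
      refine Finset.sum_eq_zero fun x hx => ?_
      rw [hOR x hx a ha b hb hab, mul_zero, zero_mul]
  · -- ∑ x, star (w a x) * w b x
    intro a ha b hb
    have hc : ∀ x ∈ Finset.Icc 1 n,
        star (w a x) * w b x = p a x * (v a * star (v b)) * p b x := by
      intro x hx
      rw [hw, hw, star_mul, star_star, (hproj a ha x hx).2]
      noncomm_ring
    rw [Finset.sum_congr rfl hc]
    rcases lt_trichotomy a b with hab | hab | hab
    · rw [if_neg (Nat.ne_of_lt hab)]
      exact Finset.sum_eq_zero fun x hx => horth x hx b hb a ha hab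
    · subst hab
      rw [if_pos rfl]
      have hc2 : ∀ x ∈ Finset.Icc 1 n,
          p a x * (v a * star (v a)) * p a x = p a x := by
        intro x hx
        simp only [Finset.mem_Icc] at ha
        rw [(hvu a ha.1 ha.2).2, mul_one, (hproj a (by simp only [Finset.mem_Icc]; omega) x hx).1]
      rw [Finset.sum_congr rfl hc2, hcol a ha]
    · rw [if_neg (Nat.ne_of_gt hab)]
      refine Finset.sum_eq_zero fun x hx => ?_
      have h0 := horth x hx a ha b hb hab
      have : p a x * (v a * star (v b)) * p b x
          = star (p b x * (v b * star (v a)) * p a x) := by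
        simp only [star_mul, star_star, (hproj a ha x hx).2, (hproj b hb x hx).2]
        noncomm_ring
      rw [this, h0, star_zero]
  · -- ∑ a, star (w a x) * w a y
    intro x hx y hy
    have hc : ∀ a ∈ Finset.Icc 1 n, star (w a x) * w a y = p a x * p a y := by
      intro a ha
      rw [hw, hw, star_mul, star_star, (hproj a ha x hx).2]
      simp only [Finset.mem_Icc] at ha
      calc p a x * v a * (star (v a) * p a y)
          = p a x * (v a * star (v a)) * p a y := by noncomm_ring
        _ = p a x * p a y := by rw [(hvu a ha.1 ha.2).2, mul_one]
    rw [Finset.sum_congr rfl hc]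
    by_cases hxy : x = y
    · subst hxy
      rw [if_pos rfl, Finset.sum_congr rfl (fun a ha => (hproj a ha x hx).1), hrow x hx]
    · rw [if_neg hxy]
      exact Finset.sum_eq_zero fun a ha => hOC a ha x hx y hy hxy
end

section
/- Let H be a Hilbert space and t₁, t₂, s₁, s₂ ∈ B(H) isometries with t₁t₁* + t₂t₂* = I and s₁s₁* + s₂s₂* = I. On H ⊕ H ⊕ H, define u₁ as the 3×3 operator block matrix with rows (t₁*, 0, 0), (s₁t₂*, s₂s₁*, 0), (0, t₂s₂*, t₁), and u₂ with rows (t₁t₂*, 0, t₂t₁*), (s₂t₁*, s₁, 0), (0, 0, t₂*). Then u₁ and u₂ are unitary operators on H ⊕ H ⊕ H. -/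
/-!
In any star ring, a pair `a, b` of isometries with `a a* + b b* = 1` has orthogonal ranges:
`x := a* b` satisfies `x = a* (a a* + b b*) b = x + x`, so `x = 0`. With the relations
`a* a = 1`, `b* b = 1`, `a* b = b* a = 0`, `a a* + b b* = 1` for both pairs, every entry of
`u* u` and `u u*` collapses to `0` or `1`.
-/

theorem Matrix.star_fin_three_of {R : Type*} [Star R] (a b c d e f g h i : R) :
    star !![a, b, c; d, e, f; g, h, i] =
      !![star a, star d, star g; star b, star e, star h; star c, star f, star i] := by
  ext i j
  fin_cases i <;> fin_cases j <;> rfl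

structure IsCuntzPair {R : Type*} [Mul R] [Add R] [One R] [Star R] (a b : R) : Prop where
  star_mul_self_left : star a * a = 1
  star_mul_self_right : star b * b = 1
  add_mul_star : a * star a + b * star b = 1

namespace IsCuntzPair

variable {R : Type*} [Ring R] [StarRing R] {a b : R}

theorem swap (h : IsCuntzPair a b) : IsCuntzPair b a :=
  ⟨h.star_mul_self_right, h.star_mul_self_left, by rw [add_comm, h.add_mul_star]⟩

theorem star_left_mul_right (h : IsCuntzPair a b) : star a * b = 0 := by
  have hdouble : star a * b = star a * b + star a * b := calc
    star a * b = star a * (a * star a + b * star b) * b := by rw [h.add_mul_star, mul_one]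
    _ = star a * b + star a * b := by
      simp only [mul_add, add_mul, ← mul_assoc, h.star_mul_self_left, one_mul]
      simp only [mul_assoc, h.star_mul_self_right, mul_one]
  simpa using hdouble

theorem star_right_mul_left (h : IsCuntzPair a b) : star b * a = 0 :=
  h.swap.star_left_mul_right

theorem star_left_mul_left_mul (h : IsCuntzPair a b) (x : R) : star a * (a * x) = x := by
  rw [← mul_assoc, h.star_mul_self_left, one_mul]

theorem star_right_mul_right_mul (h : IsCuntzPair a b) (x : R) : star b * (b * x) = x :=
  h.swap.star_left_mul_left_mul x

theorem star_left_mul_right_mul (h : IsCuntzPair a b) (x : R) : star a * (b * x) = 0 := by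
  rw [← mul_assoc, h.star_left_mul_right, zero_mul]

theorem star_right_mul_left_mul (h : IsCuntzPair a b) (x : R) : star b * (a * x) = 0 :=
  h.swap.star_left_mul_right_mul x

end IsCuntzPair

section CuntzMatrices

variable {R : Type*} [Ring R] [StarRing R]

def cuntzMatrix₁ (t₁ t₂ s₁ s₂ : R) : Matrix (Fin 3) (Fin 3) R :=
  !![star t₁, 0, 0;
     s₁ * star t₂, s₂ * star s₁, 0;
     0, t₂ * star s₂, t₁]

def cuntzMatrix₂ (t₁ t₂ s₁ s₂ : R) : Matrix (Fin 3) (Fin 3) R :=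
  !![t₁ * star t₂, 0, t₂ * star t₁;
     s₂ * star t₁, s₁, 0;
     0, 0, star t₂]

variable {t₁ t₂ s₁ s₂ : R}

theorem cuntzMatrix₁_mem_unitary (ht : IsCuntzPair t₁ t₂) (hs : IsCuntzPair s₁ s₂) :
    cuntzMatrix₁ t₁ t₂ s₁ s₂ ∈ unitary (Matrix (Fin 3) (Fin 3) R) := by
  rw [Unitary.mem_iff]
  constructor <;>
    simp [cuntzMatrix₁, Matrix.star_fin_three_of, Matrix.one_fin_three, mul_assoc,
      ht.star_mul_self_left, ht.star_right_mul_left, ht.add_mul_star, ht.swap.add_mul_star,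
      ht.star_right_mul_right_mul, ht.star_left_mul_right_mul,
      hs.star_left_mul_left_mul, hs.star_right_mul_right_mul, hs.star_left_mul_right_mul,
      hs.star_right_mul_left_mul, hs.add_mul_star]

theorem cuntzMatrix₂_mem_unitary (ht : IsCuntzPair t₁ t₂) (hs : IsCuntzPair s₁ s₂) :
    cuntzMatrix₂ t₁ t₂ s₁ s₂ ∈ unitary (Matrix (Fin 3) (Fin 3) R) := by
  rw [Unitary.mem_iff]
  constructor <;>
    simp [cuntzMatrix₂, Matrix.star_fin_three_of, Matrix.one_fin_three, mul_assoc,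
      ht.star_mul_self_right, ht.star_left_mul_right, ht.add_mul_star, ht.swap.add_mul_star,
      ht.star_left_mul_left_mul, ht.star_right_mul_right_mul, ht.star_left_mul_right_mul,
      ht.star_right_mul_left_mul,
      hs.star_mul_self_left, hs.star_right_mul_left, hs.swap.add_mul_star,
      hs.star_right_mul_right_mul, hs.star_left_mul_right_mul]

end CuntzMatrices

/-- the block operator matrices u₁, u₂ built from two Cuntz
families t₁,t₂ and s₁,s₂ are unitary on H ⊕ H ⊕ H (represented as 3×3
operator block matrices). -/
theorem stmt16 {H : Type*} [NormedAddCommGroup H] [InnerProductSpace ℂ H]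
    [CompleteSpace H]
    (t₁ t₂ s₁ s₂ : H →L[ℂ] H)
    (ht₁ : star t₁ * t₁ = 1) (ht₂ : star t₂ * t₂ = 1)
    (hs₁ : star s₁ * s₁ = 1) (hs₂ : star s₂ * s₂ = 1)
    (hCt : t₁ * star t₁ + t₂ * star t₂ = 1)
    (hCs : s₁ * star s₁ + s₂ * star s₂ = 1)
    (u₁ u₂ : Matrix (Fin 3) (Fin 3) (H →L[ℂ] H))
    (h₁ : u₁ = !![star t₁, 0, 0;
                  s₁ * star t₂, s₂ * star s₁, 0;
                  0, t₂ * star s₂, t₁])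
    (h₂ : u₂ = !![t₁ * star t₂, 0, t₂ * star t₁;
                  s₂ * star t₁, s₁, 0;
                  0, 0, star t₂]) :
    star u₁ * u₁ = 1 ∧ u₁ * star u₁ = 1 ∧
    star u₂ * u₂ = 1 ∧ u₂ * star u₂ = 1 := by
  have ht : IsCuntzPair t₁ t₂ := ⟨ht₁, ht₂, hCt⟩
  have hs : IsCuntzPair s₁ s₂ := ⟨hs₁, hs₂, hCs⟩
  obtain ⟨hu₁_left, hu₁_right⟩ := Unitary.mem_iff.mp (cuntzMatrix₁_mem_unitary ht hs)
  obtain ⟨hu₂_left, hu₂_right⟩ := Unitary.mem_iff.mp (cuntzMatrix₂_mem_unitary ht hs)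
  subst h₁ h₂
  exact ⟨hu₁_left, hu₁_right, hu₂_left, hu₂_right⟩
end

section
/- Let U = (u_{a,x})_{a,x=1}^2 be a bi-unitary matrix over a unital C*-algebra A whose entries are partial isometries satisfying u_{a,x} u_{a,y}^* = 0 for x ≠ y and u_{a,x} u_{b,x}^* = 0 for a ≠ b. Then u_{1,1}^* u_{1,1} = u_{2,2}^* u_{2,2}, u_{1,2}^* u_{1,2} = u_{2,1}^* u_{2,1} = 1 − u_{1,1}^* u_{1,1}, and the elements u_{1,1}^* u_{1,1}, u_{1,1}^* u_{2,2}, u_{2,2}^* u_{1,1}, u_{1,2}^* u_{2,1}, u_{2,1}^* u_{1,2} pairwise commute. -/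
/-!
Summing the bi-unitarity relations along rows and columns shows that `u₀₀` and `u₁₁` have the
same source projection and the same range projection (both being complementary to those of
`u₀₁`), and likewise `u₀₁` and `u₁₀`. For two partial isometries `v`, `w` with common source
and range, `v⋆v` is a unit for `v⋆w` and `w⋆v` on both sides, and
`(v⋆w)(w⋆v) = (w⋆v)(v⋆w) = v⋆v`, so these three commute. Words built from the diagonal pair
annihilate words built from the antidiagonal pair, by the orthogonality relations.
-/

theorem star_mul_mul_star_of_mul_star_mul {A : Type*} [Monoid A] [StarMul A] {v : A}
    (hv : v * star v * v = v) : star v * v * star v = star v := by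
  simpa [mul_assoc] using congrArg star hv

theorem commute_mul_of_mul_eq_zero_of_mul_eq_zero {A : Type*} [SemigroupWithZero A]
    {x y z w : A} (hyz : y * z = 0) (hwx : w * x = 0) : Commute (x * y) (z * w) := by
  change x * y * (z * w) = z * w * (x * y)
  rw [mul_assoc, ← mul_assoc y, hyz, mul_assoc z, ← mul_assoc w, hwx]
  simp

theorem pairwise_commute_star_mul_of_eq_source_of_eq_range {A : Type*} [Monoid A] [StarMul A]
    {v w : A} (hv : v * star v * v = v) (hw : w * star w * w = w)
    (hsrc : star v * v = star w * w) (hrng : v * star v = w * star w) :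
    [star v * v, star v * w, star w * v].Pairwise Commute := by
  have hv' := star_mul_mul_star_of_mul_star_mul hv
  have hw' := star_mul_mul_star_of_mul_star_mul hw
  have hS : Commute (star v * v) (star v * w) :=
    (show star v * v * (star v * w) = star v * w by rw [← mul_assoc, hv']).trans
      (show star v * w * (star v * v) = star v * w by
        rw [hsrc, mul_assoc, ← mul_assoc w, hw]).symm
  have hT : Commute (star v * v) (star w * v) :=
    (show star v * v * (star w * v) = star w * v by rw [hsrc, ← mul_assoc, hw']).trans
      (show star w * v * (star v * v) = star w * v by
        rw [mul_assoc, ← mul_assoc v, hv]).symm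
  have hST : Commute (star v * w) (star w * v) :=
    (show star v * w * (star w * v) = star v * v by
        rw [mul_assoc, ← mul_assoc w, ← hrng, hv]).trans
      (show star w * v * (star v * w) = star v * v by
        rw [mul_assoc, ← mul_assoc v, hrng, hw, hsrc]).symm
  simp [hS, hT, hST]

theorem stmt18_general {A : Type*} [NormedRing A] [StarRing A]
    (u : Fin 2 → Fin 2 → A)
    (hUU : ∀ a b : Fin 2, ∑ x, u a x * star (u b x) = if a = b then 1 else 0)
    (hUU' : ∀ x y : Fin 2, ∑ a, star (u a x) * u a y = if x = y then 1 else 0)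
    (hUt : ∀ x y : Fin 2, ∑ a, u a x * star (u a y) = if x = y then 1 else 0)
    (hUt' : ∀ a b : Fin 2, ∑ x, star (u a x) * u b x = if a = b then 1 else 0)
    (hpi : ∀ a x : Fin 2, u a x * star (u a x) * u a x = u a x)
    (hrow : ∀ (a : Fin 2) {x y : Fin 2}, x ≠ y → u a x * star (u a y) = 0)
    (hcol : ∀ (x : Fin 2) {a b : Fin 2}, a ≠ b → u a x * star (u b x) = 0) :
    star (u 0 0) * u 0 0 = star (u 1 1) * u 1 1 ∧
    star (u 0 1) * u 0 1 = star (u 1 0) * u 1 0 ∧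
    star (u 0 1) * u 0 1 = 1 - star (u 0 0) * u 0 0 ∧
    (∀ x ∈ [star (u 0 0) * u 0 0, star (u 0 0) * u 1 1, star (u 1 1) * u 0 0,
            star (u 0 1) * u 1 0, star (u 1 0) * u 0 1],
     ∀ y ∈ [star (u 0 0) * u 0 0, star (u 0 0) * u 1 1, star (u 1 1) * u 0 0,
            star (u 0 1) * u 1 0, star (u 1 0) * u 0 1],
      x * y = y * x) := by
  have hsrc₀ : star (u 0 0) * u 0 0 + star (u 0 1) * u 0 1 = 1 := by
    simpa [Fin.sum_univ_two] using hUt' 0 0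
  have hsrc₁ : star (u 0 1) * u 0 1 + star (u 1 1) * u 1 1 = 1 := by
    simpa [Fin.sum_univ_two] using hUU' 1 1
  have hsrc₂ : star (u 0 0) * u 0 0 + star (u 1 0) * u 1 0 = 1 := by
    simpa [Fin.sum_univ_two] using hUU' 0 0
  have hrng₀ : u 0 0 * star (u 0 0) + u 0 1 * star (u 0 1) = 1 := by
    simpa [Fin.sum_univ_two] using hUU 0 0
  have hrng₁ : u 0 1 * star (u 0 1) + u 1 1 * star (u 1 1) = 1 := by
    simpa [Fin.sum_univ_two] using hUt 1 1
  have hrng₂ : u 0 0 * star (u 0 0) + u 1 0 * star (u 1 0) = 1 := by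
    simpa [Fin.sum_univ_two] using hUt 0 0
  have hsrc_diag := (eq_sub_of_add_eq hsrc₀).trans (eq_sub_of_add_eq' hsrc₁).symm
  have hsrc_anti := (eq_sub_of_add_eq' hsrc₀).trans (eq_sub_of_add_eq' hsrc₂).symm
  have hrng_diag := (eq_sub_of_add_eq hrng₀).trans (eq_sub_of_add_eq' hrng₁).symm
  have hrng_anti := (eq_sub_of_add_eq' hrng₀).trans (eq_sub_of_add_eq' hrng₂).symm
  refine ⟨hsrc_diag, hsrc_anti, eq_sub_of_add_eq' hsrc₀, ?_⟩
  have hdiag := pairwise_commute_star_mul_of_eq_source_of_eq_range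
    (hpi 0 0) (hpi 1 1) hsrc_diag hrng_diag
  have hanti := (pairwise_commute_star_mul_of_eq_source_of_eq_range
    (hpi 0 1) (hpi 1 0) hsrc_anti hrng_anti).of_cons
  have hcross : ∀ x ∈ [star (u 0 0) * u 0 0, star (u 0 0) * u 1 1, star (u 1 1) * u 0 0],
      ∀ y ∈ [star (u 0 1) * u 1 0, star (u 1 0) * u 0 1], Commute x y := by
    intro x hx y hy
    fin_cases hx <;> fin_cases hy <;>
      exact commute_mul_of_mul_eq_zero_of_mul_eq_zero
        (by first | exact hrow _ (by decide) | exact hcol _ (by decide))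
        (by first | exact hrow _ (by decide) | exact hcol _ (by decide))
  exact (List.pairwise_append.2 ⟨hdiag, hanti, hcross⟩).forall_of_forall (R := Commute)
    (fun x _ => Commute.refl x)

/-- structure of the game algebra generators for K₂ (indices 1,2
rendered as 0,1 in `Fin 2`): the nonzero two-letter words commute. -/
theorem stmt18 {A : Type*} [NormedRing A] [StarRing A] [CStarRing A]
    [CompleteSpace A] [NormedAlgebra ℂ A] [StarModule ℂ A]
    (u : Fin 2 → Fin 2 → A)
    (hUU : ∀ a b : Fin 2, ∑ x, u a x * star (u b x) = if a = b then 1 else 0)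
    (hUU' : ∀ x y : Fin 2, ∑ a, star (u a x) * u a y = if x = y then 1 else 0)
    (hUt : ∀ x y : Fin 2, ∑ a, u a x * star (u a y) = if x = y then 1 else 0)
    (hUt' : ∀ a b : Fin 2, ∑ x, star (u a x) * u b x = if a = b then 1 else 0)
    (hpi : ∀ a x : Fin 2, u a x * star (u a x) * u a x = u a x)
    (hrow : ∀ (a : Fin 2) {x y : Fin 2}, x ≠ y → u a x * star (u a y) = 0)
    (hcol : ∀ (x : Fin 2) {a b : Fin 2}, a ≠ b → u a x * star (u b x) = 0) :
    star (u 0 0) * u 0 0 = star (u 1 1) * u 1 1 ∧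
    star (u 0 1) * u 0 1 = star (u 1 0) * u 1 0 ∧
    star (u 0 1) * u 0 1 = 1 - star (u 0 0) * u 0 0 ∧
    (∀ x ∈ [star (u 0 0) * u 0 0, star (u 0 0) * u 1 1, star (u 1 1) * u 0 0,
            star (u 0 1) * u 1 0, star (u 1 0) * u 0 1],
     ∀ y ∈ [star (u 0 0) * u 0 0, star (u 0 0) * u 1 1, star (u 1 1) * u 0 0,
            star (u 0 1) * u 1 0, star (u 1 0) * u 0 1],
      x * y = y * x) :=
  stmt18_general u hUU hUU' hUt hUt' hpi hrow hcol
end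

section
/- In M_2(ℂ), let u_{1,1} = E_{12} + E_{21} (the flip), u_{2,2} = u_{3,3} = E_{11}, u_{2,3} = u_{3,2} = E_{22}, and all other u_{a,x} = 0 for a,x ∈ {1,2,3}; then the 3×3 block matrix U = (u_{a,x}) ∈ M_3(M_2(ℂ)) is bi-unitary, satisfies the orthogonality conditions for the graph G = K₁ ∪ K₂ on vertices {1,2,3} with single edge {2,3} (i.e., u_{a,x} u_{b,y}^* = 0 whenever exactly one of a ~ b, x ~ y holds), and the normalized trace satisfies tr(u_{2,2}^* u_{1,1} u_{3,2}^* u_{1,1}) = 1/2 ≠ 0. -/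
open Matrix

private lemma star_A : star (!![(0:ℂ), 1; 1, 0]) = !![(0:ℂ), 1; 1, 0] := by
  ext i j; fin_cases i <;> fin_cases j <;> simp [Matrix.star_apply]
private lemma star_P : star (!![(1:ℂ), 0; 0, 0]) = !![(1:ℂ), 0; 0, 0] := by
  ext i j; fin_cases i <;> fin_cases j <;> simp [Matrix.star_apply]
private lemma star_Q : star (!![(0:ℂ), 0; 0, 1]) = !![(0:ℂ), 0; 0, 1] := by
  ext i j; fin_cases i <;> fin_cases j <;> simp [Matrix.star_apply]
private lemma AA : (!![(0:ℂ), 1; 1, 0]) * (!![(0:ℂ), 1; 1, 0]) = 1 := by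
  ext i j; fin_cases i <;> fin_cases j <;>
    simp [Matrix.mul_apply, Fin.sum_univ_two, Matrix.one_apply]
private lemma PP : (!![(1:ℂ), 0; 0, 0]) * (!![(1:ℂ), 0; 0, 0]) = !![(1:ℂ), 0; 0, 0] := by
  ext i j; fin_cases i <;> fin_cases j <;> simp [Matrix.mul_apply, Fin.sum_univ_two]
private lemma QQ : (!![(0:ℂ), 0; 0, 1]) * (!![(0:ℂ), 0; 0, 1]) = !![(0:ℂ), 0; 0, 1] := by
  ext i j; fin_cases i <;> fin_cases j <;> simp [Matrix.mul_apply, Fin.sum_univ_two]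
private lemma PQ : (!![(1:ℂ), 0; 0, 0]) * (!![(0:ℂ), 0; 0, 1]) = 0 := by
  ext i j; fin_cases i <;> fin_cases j <;> simp [Matrix.mul_apply, Fin.sum_univ_two]
private lemma QP : (!![(0:ℂ), 0; 0, 1]) * (!![(1:ℂ), 0; 0, 0]) = 0 := by
  ext i j; fin_cases i <;> fin_cases j <;> simp [Matrix.mul_apply, Fin.sum_univ_two]
private lemma PplusQ : (!![(1:ℂ), 0; 0, 0]) + (!![(0:ℂ), 0; 0, 1]) = 1 := by
  ext i j; fin_cases i <;> fin_cases j <;> simp [Matrix.one_apply]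
private lemma tr_val :
    Matrix.trace ((!![(1:ℂ), 0; 0, 0]) * (!![(0:ℂ), 1; 1, 0]) * (!![(0:ℂ), 0; 0, 1])
      * (!![(0:ℂ), 1; 1, 0])) = 1 := by
  simp [Matrix.trace, Matrix.mul_apply, Fin.sum_univ_two, Matrix.diag]

set_option maxHeartbeats 1600000 in
/-- an explicit 2-dimensional representation for the graph
K₁ ∪ K₂ (vertices 1,2,3 rendered as 0,1,2 in `Fin 3`; unique edge {2,3},
i.e. {1,2} in `Fin 3`): the block matrix U is bi-unitary, satisfies the
orthogonality conditions, and the normalized trace of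
u_{2,2}^* u_{1,1} u_{3,2}^* u_{1,1} is 1/2 ≠ 0. -/
theorem stmt19
    (u : Fin 3 → Fin 3 → Matrix (Fin 2) (Fin 2) ℂ)
    (h11 : u 0 0 = !![0, 1; 1, 0])
    (h22 : u 1 1 = !![1, 0; 0, 0]) (h33 : u 2 2 = !![1, 0; 0, 0])
    (h23 : u 1 2 = !![0, 0; 0, 1]) (h32 : u 2 1 = !![0, 0; 0, 1])
    (h12 : u 0 1 = 0) (h13 : u 0 2 = 0) (h21 : u 1 0 = 0) (h31 : u 2 0 = 0)
    -- the adjacency relation of G = K₁ ∪ K₂ with edge {2,3}: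
    (adj : Fin 3 → Fin 3 → Prop)
    (hadj : ∀ a b, adj a b ↔ ((a = 1 ∧ b = 2) ∨ (a = 2 ∧ b = 1))) :
    -- bi-unitarity
    (∀ a b : Fin 3, ∑ x, u a x * star (u b x) = if a = b then 1 else 0) ∧
    (∀ x y : Fin 3, ∑ a, star (u a x) * u a y = if x = y then 1 else 0) ∧
    (∀ x y : Fin 3, ∑ a, u a x * star (u a y) = if x = y then 1 else 0) ∧
    (∀ a b : Fin 3, ∑ x, star (u a x) * u b x = if a = b then 1 else 0) ∧
    -- orthogonality conditions for G
    (∀ a b x y : Fin 3,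
      ((adj a b ∧ ¬ adj x y) ∨ (¬ adj a b ∧ adj x y)) →
      u a x * star (u b y) = 0) ∧
    -- the nonlocality witness
    (1 / 2 : ℂ) * Matrix.trace (star (u 1 1) * u 0 0 * star (u 2 1) * u 0 0)
      = 1 / 2 ∧ (1 / 2 : ℂ) ≠ 0 := by
  refine ⟨?_, ?_, ?_, ?_, ?_, ?_, by norm_num⟩
  · intro a b
    fin_cases a <;> fin_cases b <;>
      simp [Fin.sum_univ_three, h11, h22, h33, h23, h32, h12, h13, h21, h31,
        star_A, star_P, star_Q, AA, PP, QQ, PQ, QP, PplusQ] <;>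
      (try (ext i j; fin_cases i <;> fin_cases j <;> simp [Matrix.one_apply]))
  · intro x y
    fin_cases x <;> fin_cases y <;>
      simp [Fin.sum_univ_three, h11, h22, h33, h23, h32, h12, h13, h21, h31,
        star_A, star_P, star_Q, AA, PP, QQ, PQ, QP, PplusQ] <;>
      (try (ext i j; fin_cases i <;> fin_cases j <;> simp [Matrix.one_apply]))
  · intro x y
    fin_cases x <;> fin_cases y <;>
      simp [Fin.sum_univ_three, h11, h22, h33, h23, h32, h12, h13, h21, h31,
        star_A, star_P, star_Q, AA, PP, QQ, PQ, QP, PplusQ] <;>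
      (try (ext i j; fin_cases i <;> fin_cases j <;> simp [Matrix.one_apply]))
  · intro a b
    fin_cases a <;> fin_cases b <;>
      simp [Fin.sum_univ_three, h11, h22, h33, h23, h32, h12, h13, h21, h31,
        star_A, star_P, star_Q, AA, PP, QQ, PQ, QP, PplusQ] <;>
      (try (ext i j; fin_cases i <;> fin_cases j <;> simp [Matrix.one_apply]))
  · intro a b x y h
    rw [hadj, hadj] at h
    fin_cases a <;> fin_cases b <;> fin_cases x <;> fin_cases y <;>
      simp_all [h11, h22, h33, h23, h32, h12, h13, h21, h31,
        star_A, star_P, star_Q, PQ, QP] <;>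
      (try (ext i j; fin_cases i <;> fin_cases j <;> simp [Matrix.one_apply]))
  · rw [h11, h22, h32, star_P, star_Q, tr_val]
    norm_num
end
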